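/- Let d ≥ 1 and let u : ℝ^d → ℝ be a bounded function such that M := sup{ |u(x+h)+u(x−h)−2u(x)|/|h| : x ∈ ℝ^d, h ∈ ℝ^d, h ≠ 0 } is finite. Then there exists an absolute constant C > 0 such that for all x, y ∈ ℝ^d with x ≠ y one has |u(x)−u(y)| ≤ C (sup_{ℝ^d}|u| + M) |x−y| (1 + |log|x−y||). In other words, the Hölder–Zygmund space C¹_*(ℝ^d) embeds continuously into the space of log-Lipschitz functions. -/

import Mathlib

open scoped ENNReal

noncomputable section

abbrev Euc (d : ℕ) := EuclideanSpace ℝ (Fin d)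

/-!
Since `2 (u(x+h) - u(x)) = (u(x+2h) - u(x)) - (u(x+2h) + u(x) - 2u(x+h))`, a first difference at
step `h` is at most half the first difference at step `2h` plus `M‖h‖/2`. Iterating `n` times and
bounding the last first difference by `2B` gives `|u(x+h) - u(x)| ≤ 2B/2ⁿ + nM‖h‖/2`; the choice
`2ⁿ ≈ 1/‖h‖`, i.e. `n ≈ |log ‖h‖|`, yields the log-Lipschitz bound.
-/

open Real

lemma exists_nat_one_le_two_pow_mul_and_le_one_add_two_mul_abs_log {t : ℝ} (ht : 0 < t) :
    ∃ n : ℕ, 1 ≤ 2 ^ n * t ∧ (n : ℝ) ≤ 1 + 2 * |log t| := by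
  refine ⟨⌈2 * |log t|⌉₊, ?_, ?_⟩
  · have hlog2 : 1 / 2 < log 2 := by linarith [log_two_gt_d9]
    have hn : 2 * |log t| ≤ (⌈2 * |log t|⌉₊ : ℝ) := Nat.le_ceil _
    have hlog : 0 ≤ log (2 ^ ⌈2 * |log t|⌉₊ * t) := by
      rw [log_mul (by positivity) ht.ne', log_pow]
      nlinarith [neg_abs_le (log t), abs_nonneg (log t)]
    simpa [log_nonneg_iff (by positivity : (0 : ℝ) < 2 ^ ⌈2 * |log t|⌉₊ * t)] using hlog
  · linarith [Nat.ceil_lt_add_one (by positivity : (0 : ℝ) ≤ 2 * |log t|)]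

section Zygmund

variable {E : Type*} [NormedAddCommGroup E] [NormedSpace ℝ E] {u : E → ℝ} {B M : ℝ}

lemma abs_sub_le_half_abs_sub_two_smul_add
    (hM : ∀ x h : E, h ≠ 0 → |u (x + h) + u (x - h) - 2 * u x| ≤ M * ‖h‖) (x : E) {h : E}
    (hh : h ≠ 0) :
    |u (x + h) - u x| ≤ |u (x + (2 : ℝ) • h) - u x| / 2 + M * ‖h‖ / 2 := by
  have hsecond := hM (x + h) h hh
  rw [add_sub_cancel_right, add_assoc, ← two_smul ℝ h] at hsecond
  have hsplit : u (x + h) - u x =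
      ((u (x + (2 : ℝ) • h) - u x) - (u (x + (2 : ℝ) • h) + u x - 2 * u (x + h))) / 2 := by ring
  rw [hsplit, abs_div, abs_two]
  linarith [abs_sub (u (x + (2 : ℝ) • h) - u x) (u (x + (2 : ℝ) • h) + u x - 2 * u (x + h))]

lemma abs_sub_le_dyadic_of_abs_second_diff_le
    (hM : ∀ x h : E, h ≠ 0 → |u (x + h) + u (x - h) - 2 * u x| ≤ M * ‖h‖) (n : ℕ) (x : E) {h : E}
    (hh : h ≠ 0) :
    |u (x + h) - u x| ≤ |u (x + (2 : ℝ) ^ n • h) - u x| / 2 ^ n + n * M * ‖h‖ / 2 := by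
  induction n generalizing h with
  | zero => simp
  | succ n ih =>
    have hdouble := ih (h := (2 : ℝ) • h) (smul_ne_zero two_ne_zero hh)
    rw [smul_smul, ← pow_succ, norm_smul, Real.norm_two] at hdouble
    calc |u (x + h) - u x|
        ≤ |u (x + (2 : ℝ) • h) - u x| / 2 + M * ‖h‖ / 2 :=
          abs_sub_le_half_abs_sub_two_smul_add hM x hh
      _ ≤ (|u (x + (2 : ℝ) ^ (n + 1) • h) - u x| / 2 ^ n + n * M * (2 * ‖h‖) / 2) / 2
          + M * ‖h‖ / 2 := by gcongr
      _ = |u (x + (2 : ℝ) ^ (n + 1) • h) - u x| / 2 ^ (n + 1) + (n + 1 : ℕ) * M * ‖h‖ / 2 := by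
          push_cast; ring

theorem abs_sub_le_log_lipschitz_of_abs_second_diff_le (hB : ∀ x, |u x| ≤ B)
    (hM : ∀ x h : E, h ≠ 0 → |u (x + h) + u (x - h) - 2 * u x| ≤ M * ‖h‖) (x y : E) :
    |u x - u y| ≤ 2 * (B + M) * ‖x - y‖ * (1 + |log ‖x - y‖|) := by
  rcases eq_or_ne y x with rfl | hyx
  · simp
  set h := y - x
  have hh : h ≠ 0 := sub_ne_zero.2 hyx
  have hnorm : ‖x - y‖ = ‖h‖ := norm_sub_rev x y
  rw [hnorm, abs_sub_comm, ← add_sub_cancel x y]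
  have hpos : 0 < ‖h‖ := norm_pos_iff.2 hh
  have hB0 : 0 ≤ B := (abs_nonneg _).trans (hB x)
  have hM0 : 0 ≤ M := nonneg_of_mul_nonneg_left ((abs_nonneg _).trans (hM x h hh)) hpos
  obtain ⟨n, hscale, hn⟩ := exists_nat_one_le_two_pow_mul_and_le_one_add_two_mul_abs_log hpos
  have hfar : |u (x + (2 : ℝ) ^ n • h) - u x| ≤ 2 * B := by
    linarith [abs_sub (u (x + (2 : ℝ) ^ n • h)) (u x), hB (x + (2 : ℝ) ^ n • h), hB x]
  have hL := abs_nonneg (log ‖h‖)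
  calc |u (x + h) - u x|
      ≤ |u (x + (2 : ℝ) ^ n • h) - u x| / 2 ^ n + n * M * ‖h‖ / 2 :=
        abs_sub_le_dyadic_of_abs_second_diff_le hM n x hh
    _ ≤ 2 * B * ‖h‖ + (1 + 2 * |log ‖h‖|) * M * ‖h‖ / 2 := by
        gcongr
        rw [div_le_iff₀ (by positivity)]
        nlinarith
    _ ≤ 2 * (B + M) * ‖h‖ * (1 + |log ‖h‖|) := by
        nlinarith [mul_nonneg (mul_nonneg hB0 hpos.le) hL, mul_nonneg (mul_nonneg hM0 hpos.le) hL]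

end Zygmund

/-- The Hölder–Zygmund space `C¹_*(ℝ^d)` embeds continuously into the space of
log-Lipschitz functions: there is an absolute constant `C > 0` such that, for every `d ≥ 1` and
every bounded `u : ℝ^d → ℝ` with finite Zygmund seminorm (witnessed by bounds `B` and `M`),
`|u(x) − u(y)| ≤ C (B + M) |x−y| (1 + |log |x−y||)` for all `x ≠ y`. -/
theorem statement7 :
    ∃ C : ℝ, 0 < C ∧
      ∀ (d : ℕ), 1 ≤ d → ∀ (u : Euc d → ℝ) (B M : ℝ),
        (∀ x : Euc d, |u x| ≤ B) →
        (∀ x h : Euc d, h ≠ 0 → |u (x + h) + u (x - h) - 2 * u x| ≤ M * ‖h‖) →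
        ∀ x y : Euc d, x ≠ y →
          |u x - u y| ≤ C * (B + M) * ‖x - y‖ * (1 + |Real.log ‖x - y‖|) :=
  ⟨2, two_pos, fun _ _ _ _ _ hB hM x y _ =>
    abs_sub_le_log_lipschitz_of_abs_second_diff_le hB hM x y⟩
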